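/- arXiv:2012.00736 — 3 statements merged into one kernel-verified Lean document; each statement's English description precedes it below -/
import Mathlib

section
/- (No-Programming Theorem, part 1: orthogonality of programs.) Let d, d_P, N be positive integers. Let G be a unitary operator on ℂ^d ⊗ ℂ^{d_P} (realized as ℂ^(d×d_P)), let U_1, …, U_N be unitary d×d complex matrices that are pairwise distinct up to a global phase (for i ≠ j there is no c ∈ ℂ with U_i = c·U_j), and suppose there exist unit vectors P_1, …, P_N ∈ ℂ^{d_P} and vectors P_1', …, P_N' ∈ ℂ^{d_P} such that for every i and every ψ ∈ ℂ^d one has G(ψ ⊗ P_i) = (U_i ψ) ⊗ P_i'. Then the program states are mutually orthogonal: ⟨P_i, P_j⟩ = 0 for all i ≠ j. -/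
/-- The tensor product of a vector `ψ : ℂ^d` with a vector `φ : ℂ^m`,
realized as a vector indexed by `Fin d × Fin m` with entries `ψ a * φ b`. -/
noncomputable def tensorVec {d m : ℕ} (ψ : Fin d → ℂ) (φ : Fin m → ℂ) :
    Fin d × Fin m → ℂ := fun p => ψ p.1 * φ p.2

/-!
Since `G` is unitary, `⟨ψ, φ⟩ ⟨P i, P j⟩ = ⟨U i ψ, U j φ⟩ ⟨P' i, P' j⟩` for all `ψ, φ`, that is
`⟨P i, P j⟩ • 1 = ⟨P' i, P' j⟩ • (U i)ᴴ U j`. If `⟨P' i, P' j⟩ ≠ 0` this makes `U j` a scalar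
multiple of `U i`, which is excluded; so `⟨P' i, P' j⟩ = 0`, and then `⟨P i, P j⟩ = 0`.
-/

open Matrix

namespace Matrix

variable {n α : Type*} [Fintype n] [DecidableEq n]

lemma ext_of_forall_star_dotProduct_mulVec {m : Type*} [Fintype m] [DecidableEq m]
    [CommSemiring α] [StarRing α] {A B : Matrix m n α}
    (h : ∀ (ψ : m → α) (φ : n → α), star ψ ⬝ᵥ A *ᵥ φ = star ψ ⬝ᵥ B *ᵥ φ) : A = B :=
  ext_of_mulVec_single fun b => funext fun a => by
    simpa [Pi.single_star, single_one_dotProduct] using h (Pi.single a 1) (Pi.single b 1)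

lemma star_mulVec_dotProduct_mulVec_of_mem_unitaryGroup [CommRing α] [StarRing α]
    {G : Matrix n n α} (hG : G ∈ unitaryGroup n α) (v w : n → α) :
    star (G *ᵥ v) ⬝ᵥ G *ᵥ w = star v ⬝ᵥ w := by
  rw [star_mulVec, dotProduct_mulVec, vecMul_vecMul, ← star_eq_conjTranspose,
    Unitary.star_mul_self_of_mem hG, vecMul_one]

lemma eq_zero_of_smul_one_eq_smul_conjTranspose_mul [Nonempty n] [Field α] [StarRing α]
    {A B : Matrix n n α} (hA : A ∈ unitaryGroup n α) (hB : ∀ k : α, B ≠ k • A) {s c : α}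
    (h : s • (1 : Matrix n n α) = c • (Aᴴ * B)) : s = 0 := by
  by_cases hc : c = 0
  · obtain ⟨a⟩ := ‹Nonempty n›
    simpa [hc] using congrFun (congrFun h a) a
  · refine absurd ?_ (hB (s / c))
    have hAB : Aᴴ * B = (s / c) • 1 := by
      rw [div_eq_inv_mul, mul_smul, h, smul_smul, inv_mul_cancel₀ hc, one_smul]
    calc B = (A * Aᴴ) * B := by rw [← star_eq_conjTranspose, Unitary.mul_star_self_of_mem hA,
            Matrix.one_mul]
      _ = (s / c) • A := by rw [Matrix.mul_assoc, hAB, Matrix.mul_smul, Matrix.mul_one]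

end Matrix

lemma star_tensorVec_dotProduct_tensorVec {d m : ℕ} (v w : Fin d → ℂ) (p q : Fin m → ℂ) :
    star (tensorVec v p) ⬝ᵥ tensorVec w q = (star v ⬝ᵥ w) * (star p ⬝ᵥ q) := by
  simp only [tensorVec, dotProduct, Pi.star_apply, star_mul', Finset.sum_mul_sum,
    Fintype.sum_prod_type]
  refine Finset.sum_congr rfl fun a _ => Finset.sum_congr rfl fun b _ => ?_
  ring

lemma smul_one_eq_smul_conjTranspose_mul_of_tensorVec {d m : ℕ}
    {G : Matrix (Fin d × Fin m) (Fin d × Fin m) ℂ} (hG : G ∈ unitaryGroup (Fin d × Fin m) ℂ)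
    {A B : Matrix (Fin d) (Fin d) ℂ} {p q p' q' : Fin m → ℂ}
    (hA : ∀ ψ, G *ᵥ tensorVec ψ p = tensorVec (A *ᵥ ψ) p')
    (hB : ∀ φ, G *ᵥ tensorVec φ q = tensorVec (B *ᵥ φ) q') :
    (star p ⬝ᵥ q) • (1 : Matrix (Fin d) (Fin d) ℂ) = (star p' ⬝ᵥ q') • (Aᴴ * B) := by
  refine ext_of_forall_star_dotProduct_mulVec fun ψ φ => ?_
  have h := star_mulVec_dotProduct_mulVec_of_mem_unitaryGroup hG (tensorVec ψ p) (tensorVec φ q)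
  rw [hA, hB, star_tensorVec_dotProduct_tensorVec, star_tensorVec_dotProduct_tensorVec] at h
  rw [smul_mulVec, smul_mulVec, one_mulVec, dotProduct_smul, dotProduct_smul, ← mulVec_mulVec,
    dotProduct_mulVec, ← star_mulVec, smul_eq_mul, smul_eq_mul]
  linear_combination h.symm

theorem no_programming_orthogonality_general
    (d dP N : ℕ) (hd : 0 < d)
    (G : Matrix (Fin d × Fin dP) (Fin d × Fin dP) ℂ)
    (hG : G ∈ Matrix.unitaryGroup (Fin d × Fin dP) ℂ)
    (U : Fin N → Matrix (Fin d) (Fin d) ℂ)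
    (hU : ∀ i, U i ∈ Matrix.unitaryGroup (Fin d) ℂ)
    (hdistinct : ∀ i j, i ≠ j → ∀ c : ℂ, U i ≠ c • U j)
    (P P' : Fin N → (Fin dP → ℂ))
    (hproc : ∀ i (ψ : Fin d → ℂ),
      G.mulVec (tensorVec ψ (P i)) = tensorVec ((U i).mulVec ψ) (P' i)) :
    ∀ i j, i ≠ j → ∑ a, star (P i a) * P j a = 0 := by
  intro i j hij
  have : Nonempty (Fin d) := Fin.pos_iff_nonempty.mp hd
  exact eq_zero_of_smul_one_eq_smul_conjTranspose_mul (hU i) (hdistinct j i hij.symm)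
    (smul_one_eq_smul_conjTranspose_mul_of_tensorVec hG (hproc i) (hproc j))

/-- No-Programming Theorem, part 1: the program states of distinct unitaries
are mutually orthogonal. -/
theorem no_programming_orthogonality
    (d dP N : ℕ) (hd : 0 < d) (hdP : 0 < dP) (hN : 0 < N)
    (G : Matrix (Fin d × Fin dP) (Fin d × Fin dP) ℂ)
    (hG : G ∈ Matrix.unitaryGroup (Fin d × Fin dP) ℂ)
    (U : Fin N → Matrix (Fin d) (Fin d) ℂ)
    (hU : ∀ i, U i ∈ Matrix.unitaryGroup (Fin d) ℂ)
    (hdistinct : ∀ i j, i ≠ j → ∀ c : ℂ, U i ≠ c • U j)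
    (P P' : Fin N → (Fin dP → ℂ))
    (hPunit : ∀ i, ∑ a, star (P i a) * P i a = 1)
    (hproc : ∀ i (ψ : Fin d → ℂ),
      G.mulVec (tensorVec ψ (P i)) = tensorVec ((U i).mulVec ψ) (P' i)) :
    ∀ i j, i ≠ j → ∑ a, star (P i a) * P j a = 0 :=
  no_programming_orthogonality_general d dP N hd G hG U hU hdistinct P P' hproc
end

section
/- (Low-energy sandwich inequality for energy-limited unitaries.) Let H be a positive semidefinite d×d complex matrix, let E > 0, 0 < δ ≤ 1, and α, β ≥ 0. Let U be a unitary d×d matrix with Uᴴ H U ≼ α·H + β·1 (the unitary channel ρ ↦ U ρ Uᴴ is (α,β)-energy-limited). Let P and Q be d×d orthogonal projections such that P H P ≼ (E/δ)·P and (E/δ²)·(1 − Q) ≼ H. Then (1 − δ·(α + β/E))·P ≼ P Uᴴ Q U P ≼ P. -/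
/-!
Since `Uᴴ U = 1` and `P` is a projection, `P Uᴴ Q U P = P - (U P)ᴴ (1 - Q) (U P)`. The subtracted
term is nonnegative, which gives the upper bound; and since `1 - Q ≼ (δ²/E) H`, it is at most
`(δ²/E) P Uᴴ H U P ≼ (δ²/E) P (α H + β) P ≼ (δ α + δ² β / E) P ≼ δ (α + β / E) P`.
-/

open scoped ComplexOrder Matrix MatrixOrder

section StarRing

variable {A : Type*} [Ring A] [StarRing A]

theorem IsStarProjection.sandwich_eq_sub {p u : A} (hp : IsStarProjection p)
    (hu : star u * u = 1) (q : A) :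
    p * star u * q * u * p = p - star (u * p) * (1 - q) * (u * p) := by
  have hpp : p * p = p := hp.isIdempotentElem.eq
  have hsp : star p = p := hp.isSelfAdjoint.star_eq
  simp only [star_mul, hsp, mul_sub, sub_mul, mul_one, mul_assoc, ← mul_assoc (star u) u, hu,
    one_mul, hpp]
  abel

variable [PartialOrder A] [StarOrderedRing A]

theorem IsStarProjection.sandwich_le_self {p q u : A} (hp : IsStarProjection p)
    (hq : IsStarProjection q) (hu : star u * u = 1) : p * star u * q * u * p ≤ p := by
  rw [hp.sandwich_eq_sub hu, sub_le_self_iff]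
  exact star_left_conjugate_nonneg hq.one_sub_nonneg _

variable [Algebra ℝ A] [PosSMulMono ℝ A]

theorem IsStarProjection.conj_le_of_energyLimited {h p u : A} {α β e : ℝ}
    (hp : IsStarProjection p) (hα : 0 ≤ α)
    (hu : star u * h * u ≤ α • h + β • 1) (hph : p * h * p ≤ e • p) :
    star (u * p) * h * (u * p) ≤ (α * e + β) • p := by
  have hsp : star p = p := hp.isSelfAdjoint.star_eq
  calc star (u * p) * h * (u * p) = star p * (star u * h * u) * p := by
        simp only [star_mul, mul_assoc]
    _ ≤ star p * (α • h + β • 1) * p := star_left_conjugate_le_conjugate hu p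
    _ = α • (p * h * p) + β • p := by
        rw [hsp, mul_add, add_mul, mul_smul_comm, smul_mul_assoc, mul_smul_comm, smul_mul_assoc,
          mul_one, hp.isIdempotentElem.eq]
    _ ≤ α • (e • p) + β • p := by gcongr
    _ = (α * e + β) • p := by rw [smul_smul, add_smul]

theorem IsStarProjection.smul_le_sandwich {h p q u : A} {E δ α β : ℝ}
    (hp : IsStarProjection p) (hE : 0 < E) (hδ0 : 0 < δ) (hδ1 : δ ≤ 1) (hα : 0 ≤ α)
    (hβ : 0 ≤ β) (hu : star u * u = 1) (huh : star u * h * u ≤ α • h + β • 1)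
    (hph : p * h * p ≤ (E / δ) • p) (hqh : (E / δ ^ 2) • (1 - q) ≤ h) :
    (1 - δ * (α + β / E)) • p ≤ p * star u * q * u * p := by
  have hq : 1 - q ≤ (δ ^ 2 / E) • h := by
    rwa [← inv_div, le_inv_smul_iff_of_pos (by positivity)]
  have hcoeff : δ * α + δ ^ 2 * (β / E) ≤ δ * (α + β / E) := by
    have : δ ^ 2 ≤ δ := by nlinarith
    nlinarith [div_nonneg hβ hE.le]
  have hleak : star (u * p) * (1 - q) * (u * p) ≤ (δ * (α + β / E)) • p :=
    calc star (u * p) * (1 - q) * (u * p)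
        ≤ star (u * p) * ((δ ^ 2 / E) • h) * (u * p) := star_left_conjugate_le_conjugate hq _
      _ = (δ ^ 2 / E) • (star (u * p) * h * (u * p)) := by rw [mul_smul_comm, smul_mul_assoc]
      _ ≤ (δ ^ 2 / E) • ((α * (E / δ) + β) • p) := by
          gcongr
          exact hp.conj_le_of_energyLimited hα huh hph
      _ = (δ * α + δ ^ 2 * (β / E)) • p := by
          rw [smul_smul]
          congr 1
          field_simp
      _ ≤ (δ * (α + β / E)) • p := smul_le_smul_of_nonneg_right hcoeff hp.nonneg
  rw [hp.sandwich_eq_sub hu, sub_smul, one_smul]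
  exact sub_le_sub_left hleak p

end StarRing

theorem low_energy_sandwich_general
    (d : ℕ) (H U P Q : Matrix (Fin d) (Fin d) ℂ)
    (E δ α β : ℝ) (hE : 0 < E) (hδ0 : 0 < δ) (hδ1 : δ ≤ 1)
    (hα : 0 ≤ α) (hβ : 0 ≤ β)
    (hU : U ∈ Matrix.unitaryGroup (Fin d) ℂ)
    (hUE : ((((α : ℂ) • H + (β : ℂ) • 1) - Uᴴ * H * U)).PosSemidef)
    (hP : P.IsHermitian) (hP2 : P * P = P)
    (hQ : Q.IsHermitian) (hQ2 : Q * Q = Q)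
    (hPH : (((E / δ : ℝ) : ℂ) • P - P * H * P).PosSemidef)
    (hQH : (H - ((E / δ ^ 2 : ℝ) : ℂ) • (1 - Q)).PosSemidef) :
    (P * Uᴴ * Q * U * P - ((1 - δ * (α + β / E) : ℝ) : ℂ) • P).PosSemidef ∧
      (P - P * Uᴴ * Q * U * P).PosSemidef := by
  have hPproj : IsStarProjection P := ⟨hP2, hP⟩
  have hQproj : IsStarProjection Q := ⟨hQ2, hQ⟩
  have hUU : star U * U = 1 := Unitary.star_mul_self_of_mem hU
  simp only [← Matrix.le_iff, Complex.coe_smul] at hUE hPH hQH ⊢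
  exact ⟨hPproj.smul_le_sandwich hE hδ0 hδ1 hα hβ hUU hUE hPH hQH,
    hPproj.sandwich_le_self hQproj hUU⟩

/-- Low-energy sandwich inequality for `(α,β)`-energy-limited unitaries:
if every unit vector in the range of `P` has energy at most `E/δ`, `Q` is a
spectral projection onto energies at most `E/δ²`, and `Uᴴ H U ≼ α·H + β·1`,
then `(1 − δ·(α + β/E))·P ≼ P Uᴴ Q U P ≼ P`. -/
theorem low_energy_sandwich
    (d : ℕ) (H U P Q : Matrix (Fin d) (Fin d) ℂ)
    (hH : H.PosSemidef)
    (E δ α β : ℝ) (hE : 0 < E) (hδ0 : 0 < δ) (hδ1 : δ ≤ 1)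
    (hα : 0 ≤ α) (hβ : 0 ≤ β)
    (hU : U ∈ Matrix.unitaryGroup (Fin d) ℂ)
    (hUE : ((((α : ℂ) • H + (β : ℂ) • 1) - Uᴴ * H * U)).PosSemidef)
    (hP : P.IsHermitian) (hP2 : P * P = P)
    (hQ : Q.IsHermitian) (hQ2 : Q * Q = Q)
    (hPH : (((E / δ : ℝ) : ℂ) • P - P * H * P).PosSemidef)
    (hQH : (H - ((E / δ ^ 2 : ℝ) : ℂ) • (1 - Q)).PosSemidef) :
    (P * Uᴴ * Q * U * P - ((1 - δ * (α + β / E) : ℝ) : ℂ) • P).PosSemidef ∧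
      (P - P * Uᴴ * Q * U * P).PosSemidef :=
  low_energy_sandwich_general d H U P Q E δ α β hE hδ0 hδ1 hα hβ hU hUE hP hP2 hQ hQ2 hPH hQH
end

section
/- (Square-root perturbation under a projection sandwich.) Let P be a d×d orthogonal projection, A a positive semidefinite d×d complex matrix, and c ∈ [0,1] such that (1 − c)·P ≼ A ≼ P. Then 0 ≼ P − √A ≼ c·P; in particular the operator norm of P − √A is at most c. -/
open scoped ComplexOrder Matrix

/-- The positive semidefinite square root of a positive semidefinite matrix
(the definition `Matrix.PosSemidef.sqrt` of the older Mathlib, removed since). -/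
noncomputable def Matrix.PosSemidef.sqrt {n : Type*} [Fintype n] [DecidableEq n] {𝕜 : Type*}
    [RCLike 𝕜] {A : Matrix n n 𝕜} (hA : A.PosSemidef) : Matrix n n 𝕜 :=
  hA.1.eigenvectorUnitary.1 * Matrix.diagonal ((↑) ∘ (√·) ∘ hA.1.eigenvalues) *
    (star hA.1.eigenvectorUnitary : Matrix n n 𝕜)

/-! Operator monotonicity of the square root does all the work: on multiples of a projection `p`
it acts as `r • p ↦ √r • p`, so `√A ≤ √P = P`, and `(1 - c) • P ≤ √(1 - c) • P = √((1 - c) • P) ≤ √A`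
because `1 - c ≤ √(1 - c)` on `[0, 1]`. -/

open scoped MatrixOrder Matrix.Norms.L2Operator

lemma Matrix.PosSemidef.sqrt_eq_cfcSqrt {n : Type*} [Fintype n] [DecidableEq n] {𝕜 : Type*}
    [RCLike 𝕜] {A : Matrix n n 𝕜} (hA : A.PosSemidef) :
    hA.sqrt = CFC.sqrt A := by
  rw [CFC.sqrt_eq_cfc, cfc_nnreal_eq_real _ A, hA.1.cfc_eq]
  simp only [Matrix.IsHermitian.cfc, Matrix.PosSemidef.sqrt, Unitary.conjStarAlgAut_apply]
  congr 3
  funext i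
  simp only [Function.comp_apply, Real.coe_sqrt, Real.coe_toNNReal _ (hA.eigenvalues_nonneg i)]

namespace IsStarProjection

variable {A : Type*} [CStarAlgebra A] [PartialOrder A] [StarOrderedRing A] {p a : A}

lemma sqrt_smul (hp : IsStarProjection p) {r : ℝ} (hr : 0 ≤ r) :
    CFC.sqrt (r • p) = √r • p := by
  refine CFC.sqrt_unique ?_ (smul_nonneg (Real.sqrt_nonneg r) hp.nonneg)
  rw [smul_mul_smul, hp.isIdempotentElem.eq, Real.mul_self_sqrt hr]

lemma sqrt_le_of_le (hp : IsStarProjection p) (h : a ≤ p) : CFC.sqrt a ≤ p :=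
  calc CFC.sqrt a ≤ CFC.sqrt p := CFC.sqrt_le_sqrt a p h
    _ = p := CFC.sqrt_unique hp.isIdempotentElem.eq hp.nonneg

lemma smul_le_sqrt_of_smul_le (hp : IsStarProjection p) {r : ℝ} (hr₀ : 0 ≤ r) (hr₁ : r ≤ 1)
    (h : r • p ≤ a) : r • p ≤ CFC.sqrt a :=
  calc r • p ≤ √r • p := smul_le_smul_of_nonneg_right (Real.le_sqrt_self_iff.mpr hr₁) hp.nonneg
    _ = CFC.sqrt (r • p) := (hp.sqrt_smul hr₀).symm
    _ ≤ CFC.sqrt a := CFC.sqrt_le_sqrt _ _ h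

end IsStarProjection

/-- Square-root perturbation under a projection sandwich: if `P` is an
orthogonal projection, `A` is positive semidefinite and
`(1 − c)·P ≼ A ≼ P` with `c ∈ [0,1]`, then `0 ≼ P − √A ≼ c·P`. -/
theorem sqrt_perturbation_under_projection_sandwich
    (d : ℕ) (P A : Matrix (Fin d) (Fin d) ℂ)
    (hP : P.IsHermitian) (hP2 : P * P = P)
    (hA : A.PosSemidef) (c : ℝ) (hc0 : 0 ≤ c) (hc1 : c ≤ 1)
    (hlow : (A - ((1 - c : ℝ) : ℂ) • P).PosSemidef)
    (hup : (P - A).PosSemidef) :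
    (P - hA.sqrt).PosSemidef ∧ ((c : ℂ) • P - (P - hA.sqrt)).PosSemidef := by
  have hproj : IsStarProjection P := ⟨hP2, hP⟩
  have hlow_real : (1 - c) • P ≤ A := by rwa [RCLike.real_smul_eq_coe_smul (K := ℂ)]
  have hlower := hproj.smul_le_sqrt_of_smul_le (by linarith) (by linarith) hlow_real
  rw [hA.sqrt_eq_cfcSqrt]
  refine ⟨hproj.sqrt_le_of_le hup, ?_⟩
  have hdiff : (c : ℂ) • P - (P - CFC.sqrt A) = CFC.sqrt A - (1 - c) • P := by
    rw [RCLike.real_smul_eq_coe_smul (K := ℂ)]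
    push_cast
    module
  rw [hdiff]
  exact hlower
end
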